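/- Let ω be a modulus of continuity, f ∈ Λ_ω, N ∈ ℕ, and let a_0, …, a_N ∈ 𝕋 be points with f(a_n) = 0 for each n. For δ > 0 define ψ_{δ,N}(z) := ∏_{n=0}^{N} (z·conj(a_n) − 1)/(z·conj(a_n) − 1 − δ) on the closed unit disk. Then ψ_{δ,N}·f ∈ Λ_ω for every δ > 0, and ‖ψ_{δ,N}·f − f‖_ω → 0 as δ → 0⁺. -/

import Mathlib

open Complex MeasureTheory Metric Set Filter Topology

noncomputable section

/-- The open unit disk in `ℂ`. -/
def oDisk : Set ℂ := Metric.ball 0 1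

/-- The closed unit disk in `ℂ`. -/
def cDisk : Set ℂ := Metric.closedBall 0 1

/-- The unit circle in `ℂ`. -/
def uCircle : Set ℂ := Metric.sphere 0 1

/-- A modulus of continuity: continuous nondecreasing on `[0,2]`, `ω 0 = 0`,
`t ↦ ω t / t` nonincreasing on `(0,2]` and tending to `∞` as `t → 0⁺`. -/
structure IsModulus (ω : ℝ → ℝ) : Prop where
  contOn : ContinuousOn ω (Icc 0 2)
  monoOn : MonotoneOn ω (Icc 0 2)
  zero : ω 0 = 0
  antiOn : AntitoneOn (fun t => ω t / t) (Ioc 0 2)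
  blowup : Tendsto (fun t => ω t / t) (nhdsWithin 0 (Ioi 0)) atTop

/-- Membership in the disk algebra `A(𝔻)`: continuous on the closed disk,
holomorphic on the open disk. -/
def MemDiskAlg (f : ℂ → ℂ) : Prop :=
  ContinuousOn f cDisk ∧ DifferentiableOn ℂ f oDisk

/-- Membership in `Λ_ω`: the disk algebra together with the little-o Lipschitz
condition `|f z - f w| = o(ω |z - w|)` on the closed disk. -/
def MemLambda (ω : ℝ → ℝ) (f : ℂ → ℂ) : Prop :=
  MemDiskAlg f ∧ ∀ ε > 0, ∃ δ > 0, ∀ z ∈ cDisk, ∀ w ∈ cDisk,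
    dist z w ≤ δ → ‖f z - f w‖ ≤ ε * ω (dist z w)

/-- The norm `‖f‖_ω = sup |f| + sup |f z - f w| / ω (|z - w|)` on `Λ_ω`. -/
def lambdaNorm (ω : ℝ → ℝ) (f : ℂ → ℂ) : ℝ :=
  (⨆ z : cDisk, ‖f (z : ℂ)‖) +
    ⨆ p : cDisk × cDisk, ‖f (p.1 : ℂ) - f (p.2 : ℂ)‖ / ω (dist (p.1 : ℂ) (p.2 : ℂ))

/-- The norm `‖f‖_{Λ_ω(𝕋)} = sup_{closed disk} |f| + sup_{ξ≠ζ∈𝕋} |f ξ - f ζ| / ω (|ξ - ζ|)`. -/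
def circleNorm (ω : ℝ → ℝ) (f : ℂ → ℂ) : ℝ :=
  (⨆ z : cDisk, ‖f (z : ℂ)‖) +
    ⨆ p : uCircle × uCircle, ‖f (p.1 : ℂ) - f (p.2 : ℂ)‖ / ω (dist (p.1 : ℂ) (p.2 : ℂ))

/-- A closed ideal of `Λ_ω`: contained in `Λ_ω`, closed under addition and under
multiplication by arbitrary elements of `Λ_ω`, and closed in the norm `‖·‖_ω`. -/
def IsClosedIdeal (ω : ℝ → ℝ) (I : Set (ℂ → ℂ)) : Prop :=
  (∀ f ∈ I, MemLambda ω f) ∧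
  (∀ f ∈ I, ∀ g ∈ I, (fun z => f z + g z) ∈ I) ∧
  (∀ f ∈ I, ∀ g : ℂ → ℂ, MemLambda ω g → (fun z => g z * f z) ∈ I) ∧
  (∀ f : ℂ → ℂ, MemLambda ω f →
    (∀ ε > 0, ∃ g ∈ I, lambdaNorm ω (fun z => f z - g z) ≤ ε) → f ∈ I)

/-- `E_I`: the common boundary zero set of a family `I` of functions. -/
def zeroSetI (I : Set (ℂ → ℂ)) : Set ℂ := {ξ | ξ ∈ uCircle ∧ ∀ f ∈ I, f ξ = 0}

/-- An inner function: bounded by 1 and holomorphic on `𝔻`, with radial limits of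
modulus 1 at almost every boundary point. -/
def IsInner (U : ℂ → ℂ) : Prop :=
  DifferentiableOn ℂ U oDisk ∧ (∀ z ∈ oDisk, ‖U z‖ ≤ 1) ∧
  ∀ᵐ (θ : ℝ) ∂volume, Tendsto (fun r : ℝ => ‖U ((r : ℂ) * Complex.exp (θ * Complex.I))‖)
    (nhdsWithin 1 (Iio 1)) (nhds 1)

/-- `U` divides `f` (i.e. `f / U ∈ H^∞`): `f = U·h` on `𝔻` for a bounded
holomorphic `h`. -/
def InnerDivides (U f : ℂ → ℂ) : Prop :=
  ∃ h : ℂ → ℂ, DifferentiableOn ℂ h oDisk ∧ (∃ C : ℝ, ∀ z ∈ oDisk, ‖h z‖ ≤ C) ∧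
    ∀ z ∈ oDisk, f z = U z * h z

/-- Condition (1.1): for every `ρ ∈ [1,2]` there is `η_ρ > 0` with
`ω (t^ρ) ≥ η_ρ · (ω t)^ρ` for all `t ∈ [0,2]`. -/
def Cond11 (ω : ℝ → ℝ) : Prop :=
  ∀ ρ ∈ Icc (1 : ℝ) 2, ∃ η > 0, ∀ t ∈ Icc (0 : ℝ) 2, η * ω t ^ ρ ≤ ω (t ^ ρ)

/-- Condition (2): there is `η₂ > 0` with `ω (t²) ≥ η₂ · (ω t)²` for `t ∈ [0,2]`. -/
def Cond2 (ω : ℝ → ℝ) : Prop :=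
  ∃ η > 0, ∀ t ∈ Icc (0 : ℝ) 2, η * ω t ^ 2 ≤ ω (t ^ 2)

/-- Condition (3): there is `η > 0` with `ω (t²) ≥ η · ω t` for `t ∈ [0,2]`. -/
def Cond3 (ω : ℝ → ℝ) : Prop :=
  ∃ η > 0, ∀ t ∈ Icc (0 : ℝ) 2, η * ω t ≤ ω (t ^ 2)

/-- The point `e^{iθ}` of the unit circle. -/
def cirPt (θ : ℝ) : ℂ := Complex.exp (θ * Complex.I)

/-- `θ ↦ log |f (e^{iθ})|`. -/
def logAbs (f : ℂ → ℂ) (θ : ℝ) : ℝ := Real.log (‖f (cirPt θ)‖)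

/-- Integrability of `θ ↦ log |f (e^{iθ})|` on `[0, 2π]`. -/
def LogIntegrable (f : ℂ → ℂ) : Prop :=
  IntervalIntegrable (logAbs f) volume 0 (2 * Real.pi)

/-- The outer function `O_f` of `f`. -/
def outerFn (f : ℂ → ℂ) (z : ℂ) : ℂ :=
  Complex.exp ((2 * (Real.pi : ℂ))⁻¹ * ∫ θ in (0 : ℝ)..(2 * Real.pi),
    ((cirPt θ + z) / (cirPt θ - z)) * (logAbs f θ : ℂ))

/-- The power `O_f^s` of the outer function of `f`, for real `s`. -/
def outerPow (f : ℂ → ℂ) (s : ℝ) (z : ℂ) : ℂ :=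
  Complex.exp ((s : ℂ) * ((2 * (Real.pi : ℂ))⁻¹ * ∫ θ in (0 : ℝ)..(2 * Real.pi),
    ((cirPt θ + z) / (cirPt θ - z)) * (logAbs f θ : ℂ)))

/-- `f` is outer: `f = c · O_f` on `𝔻` for a unimodular constant `c`. -/
def IsOuter (f : ℂ → ℂ) : Prop :=
  ∃ c : ℂ, ‖c‖ = 1 ∧ ∀ z ∈ oDisk, f z = c * outerFn f z

/-- The partial outer function `f_Γ` of `f` associated with a subset `Γ` of the circle. -/
def outerOn (f : ℂ → ℂ) (Γ : Set ℂ) (z : ℂ) : ℂ :=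
  Complex.exp ((2 * (Real.pi : ℂ))⁻¹ *
    ∫ θ in {θ : ℝ | θ ∈ Ico 0 (2 * Real.pi) ∧ cirPt θ ∈ Γ},
      ((cirPt θ + z) / (cirPt θ - z)) * (logAbs f θ : ℂ))

/-- The singular function `S_μ` of a (finite positive Borel) measure `μ` on the circle. -/
def sMu (μ : Measure ℂ) (z : ℂ) : ℂ :=
  Complex.exp (-(2 * (Real.pi : ℂ))⁻¹ * ∫ ξ, (ξ + z) / (ξ - z) ∂μ)

/-- Arclength measure on the unit circle, as a measure on `ℂ`. -/
def arcMeasure : Measure ℂ :=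
  Measure.map cirPt (volume.restrict (Ico 0 (2 * Real.pi)))

/-- The (closed) support of a measure on `ℂ`. -/
def mSupport (μ : Measure ℂ) : Set ℂ := {x | ∀ ε > 0, 0 < μ (Metric.ball x ε)}

/-- `E_f`: the boundary zero set of `f`. -/
def bZeroSet (f : ℂ → ℂ) : Set ℂ := {ξ | ξ ∈ uCircle ∧ f ξ = 0}

/-- `Z_f`: the zero set of `f` in the closed disk. -/
def zSet (f : ℂ → ℂ) : Set ℂ := {z | z ∈ cDisk ∧ f z = 0}

/-- A modulus of continuity extended to `[0,∞)` by the value `ω 2` beyond `2`. -/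
def omegaExt (ω : ℝ → ℝ) (t : ℝ) : ℝ := if t ≤ 2 then ω t else ω 2

/-- The quantity `a_U(ζ)` associated to an inner function with zeros `a n` and
singular measure `μ`. -/
def aU {ι : Type*} (a : ι → ℂ) (μ : Measure ℂ) (ζ : ℂ) : ℝ :=
  (∑' n, (1 - ‖a n‖ ^ 2) / ‖ζ - a n‖ ^ 2) +
    (Real.pi)⁻¹ * ∫ x, (‖x - ζ‖ ^ 2)⁻¹ ∂μ

end

open Complex MeasureTheory Metric Set Filter Topology

/-!
Each factor `φ(z) = (z·conj a − 1)/(z·conj a − 1 − δ)` of `ψ_δ` satisfies `|φ| ≤ 1`,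
`|φ − 1| ≤ δ / max(δ, |z − a|)` and
`|φ(z) − φ(w)| ≤ δ |z − w| / (max(δ, |z − a|) · max(δ, |w − a|))`, because `Re (z·conj a) ≤ 1`
makes the denominator dominate both `δ` and `|z − a|`. As `f(a) = 0`, `|f(z)| ≤ K ω(|z − a|)`,
and since `ω(t)/t` decreases, `|(φ − 1) f| ≤ K ω(δ)`: `ψ_δ f → f` uniformly.
At scales `t = |z − w| ≤ η` the term `f(w) (φ(z) − φ(w))` is at most `(4C + Kδ/η) ω(t)`, where
`C` is the little-o constant of `f` at scale `2η`: if `d = |w − a| ≤ 2t` then `ω(d) ≤ 2 ω(t)`,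
otherwise `|z − a| ≥ d/2` and `t ω(d) ≤ d ω(t)`. Larger scales are controlled by the uniform
bound. Letting `δ → 0` and then `C → 0` gives the convergence. For fixed `δ`, `ψ_δ` is
Lipschitz, and `ω(t)/t → ∞` puts `ψ_δ f` in `Λ_ω`.
-/

namespace IsModulus

variable {ω : ℝ → ℝ}

lemma nonneg (hω : IsModulus ω) {t : ℝ} (ht₀ : 0 ≤ t) (ht₂ : t ≤ 2) : 0 ≤ ω t := by
  simpa [hω.zero] using hω.monoOn ⟨le_rfl, zero_le_two⟩ ⟨ht₀, ht₂⟩ ht₀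

lemma mul_apply_le (hω : IsModulus ω) {s t : ℝ} (ht : 0 < t) (hts : t ≤ s) (hs : s ≤ 2) :
    t * ω s ≤ s * ω t := by
  have := hω.antiOn ⟨ht, hts.trans hs⟩ ⟨ht.trans_le hts, hs⟩ hts
  rwa [div_le_div_iff₀ (ht.trans_le hts) ht, mul_comm, mul_comm (ω t)] at this

lemma pos (hω : IsModulus ω) {t : ℝ} (ht₀ : 0 < t) (ht₂ : t ≤ 2) : 0 < ω t := by
  obtain ⟨s, hs, hst⟩ :=
    ((hω.blowup.eventually_gt_atTop 0).and (Ioc_mem_nhdsGT ht₀)).exists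
  have hs₀ : 0 < ω s := (div_pos_iff_of_pos_right hst.1).1 hs
  exact hs₀.trans_le (hω.monoOn ⟨hst.1.le, hst.2.trans ht₂⟩ ⟨ht₀.le, ht₂⟩ hst.2)

lemma le_two_mul (hω : IsModulus ω) {s t : ℝ} (hs₀ : 0 ≤ s) (hs₂ : s ≤ 2) (hst : s ≤ 2 * t)
    (ht₀ : 0 < t) (ht₂ : t ≤ 2) : ω s ≤ 2 * ω t := by
  set u := min (2 * t) 2
  have hsu : ω s ≤ ω u :=
    hω.monoOn ⟨hs₀, hs₂⟩ ⟨by positivity, min_le_right _ _⟩ (le_min hst hs₂)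
  have htu : t * ω u ≤ u * ω t :=
    hω.mul_apply_le ht₀ (le_min (by linarith) ht₂) (min_le_right _ _)
  have hu : u * ω t ≤ 2 * t * ω t :=
    mul_le_mul_of_nonneg_right (min_le_left _ _) (hω.nonneg ht₀.le ht₂)
  nlinarith

lemma tendsto_nhdsGT (hω : IsModulus ω) : Tendsto ω (𝓝[>] 0) (𝓝 0) := by
  have h := (hω.contOn 0 ⟨le_rfl, zero_le_two⟩).tendsto
  rw [hω.zero] at h
  exact h.mono_left (nhdsWithin_le_of_mem (Icc_mem_nhdsGT two_pos))

lemma exists_mul_le (hω : IsModulus ω) (c : ℝ) : ∃ r > 0, ∀ t, 0 < t → t < r → c * t ≤ ω t := by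
  obtain ⟨r, hr, hsub⟩ :=
    mem_nhdsGT_iff_exists_Ioo_subset.1 (hω.blowup.eventually_ge_atTop c)
  exact ⟨r, hr, fun t ht htr => (le_div_iff₀ ht).1 (hsub ⟨ht, htr⟩)⟩

end IsModulus

lemma dist_le_two_of_mem_cDisk {z w : ℂ} (hz : z ∈ cDisk) (hw : w ∈ cDisk) : dist z w ≤ 2 := by
  have := (dist_triangle_right z w 0).trans
    (add_le_add (mem_closedBall.1 hz) (mem_closedBall.1 hw))
  linarith

lemma mem_cDisk_of_norm_eq_one {a : ℂ} (ha : ‖a‖ = 1) : a ∈ cDisk :=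
  mem_closedBall_zero_iff.2 ha.le

def ModulusBound (ω : ℝ → ℝ) (η C : ℝ) (h : ℂ → ℂ) : Prop :=
  ∀ z ∈ cDisk, ∀ w ∈ cDisk, dist z w ≤ η → ‖h z - h w‖ ≤ C * ω (dist z w)

section ModulusBound

variable {ω : ℝ → ℝ}

lemma ModulusBound.norm_le_of_eq_zero {η C : ℝ} {h : ℂ → ℂ} {a z : ℂ}
    (hC : ModulusBound ω η C h) (ha : ‖a‖ = 1) (hh : h a = 0) (hz : z ∈ cDisk)
    (hza : ‖z - a‖ ≤ η) : ‖h z‖ ≤ C * ω ‖z - a‖ := by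
  simpa [hh, dist_eq_norm] using hC z hz a (mem_cDisk_of_norm_eq_one ha) (by rwa [dist_eq_norm])

lemma ModulusBound.of_norm_le {η B A : ℝ} {g : ℂ → ℂ} (hω : IsModulus ω)
    (hg : ModulusBound ω η B g) (hA : ∀ z ∈ cDisk, ‖g z‖ ≤ A) (hη₀ : 0 < η) (hη₂ : η ≤ 2)
    (hB : 0 ≤ B) : ModulusBound ω 2 (B + 2 * A / ω η) g := by
  intro z hz w hw _
  have hA₀ : 0 ≤ A := (norm_nonneg _).trans (hA z hz)
  have hωη := hω.pos hη₀ hη₂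
  have ht₂ := dist_le_two_of_mem_cDisk hz hw
  rcases le_or_gt (dist z w) η with ht | ht
  · refine (hg z hz w hw ht).trans ?_
    gcongr
    · exact hω.nonneg dist_nonneg ht₂
    · exact le_add_of_nonneg_right (by positivity)
  · calc ‖g z - g w‖ ≤ ‖g z‖ + ‖g w‖ := norm_sub_le _ _
      _ ≤ 2 * A / ω η * ω η := by
        rw [div_mul_cancel₀ _ hωη.ne']; linarith [hA z hz, hA w hw]
      _ ≤ (B + 2 * A / ω η) * ω (dist z w) := by
        gcongr
        · exact le_add_of_nonneg_left hB
        · exact hω.monoOn ⟨hη₀.le, hη₂⟩ ⟨dist_nonneg, ht₂⟩ ht.le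

lemma MemLambda.exists_modulusBound {f : ℂ → ℂ} (hω : IsModulus ω) (hf : MemLambda ω f) :
    ∃ K, 0 ≤ K ∧ ModulusBound ω 2 K f := by
  obtain ⟨M, hM⟩ := (isCompact_closedBall (0 : ℂ) 1).exists_bound_of_continuousOn hf.1.1
  obtain ⟨η, hη, hfη⟩ := hf.2 1 one_pos
  have hfη' : ModulusBound ω (min η 2) 1 f := fun z hz w hw hzw =>
    hfη z hz w hw (hzw.trans (min_le_left _ _))
  have hM₀ : 0 ≤ M := (norm_nonneg _).trans (hM 0 (mem_closedBall_self zero_le_one))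
  have hωη := hω.pos (lt_min hη two_pos) (min_le_right _ _)
  exact ⟨_, by positivity,
    hfη'.of_norm_le hω hM (lt_min hη two_pos) (min_le_right _ _) zero_le_one⟩

lemma lambdaNorm_nonneg (hω : IsModulus ω) (g : ℂ → ℂ) : 0 ≤ lambdaNorm ω g :=
  add_nonneg (Real.iSup_nonneg fun _ => norm_nonneg _) (Real.iSup_nonneg fun p =>
    div_nonneg (norm_nonneg _) (hω.nonneg dist_nonneg (dist_le_two_of_mem_cDisk p.1.2 p.2.2)))

lemma lambdaNorm_le {A B : ℝ} {g : ℂ → ℂ} (hω : IsModulus ω) (hA : ∀ z ∈ cDisk, ‖g z‖ ≤ A)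
    (hB : ModulusBound ω 2 B g) (hA₀ : 0 ≤ A) (hB₀ : 0 ≤ B) : lambdaNorm ω g ≤ A + B := by
  refine add_le_add (Real.iSup_le (fun z => hA z z.2) hA₀)
    (Real.iSup_le (fun ⟨z, w⟩ => ?_) hB₀)
  have ht₂ := dist_le_two_of_mem_cDisk z.2 w.2
  rcases (dist_nonneg (x := (z : ℂ)) (y := w)).eq_or_lt with ht | ht
  · simp [← ht, hω.zero, hB₀]
  · exact (div_le_iff₀ (hω.pos ht ht₂)).2 (hB z z.2 w w.2 ht₂)

lemma MemLambda.mul_of_lipschitz {f g : ℂ → ℂ} {B L : ℝ} (hω : IsModulus ω)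
    (hf : MemLambda ω f) (hg : MemDiskAlg g) (hgB : ∀ z ∈ cDisk, ‖g z‖ ≤ B)
    (hgL : ∀ z ∈ cDisk, ∀ w ∈ cDisk, ‖g z - g w‖ ≤ L * dist z w) :
    MemLambda ω (fun z => g z * f z) := by
  refine ⟨⟨hg.1.mul hf.1.1, hg.2.mul hf.1.2⟩, fun ε hε => ?_⟩
  obtain ⟨M, hM⟩ := (isCompact_closedBall (0 : ℂ) 1).exists_bound_of_continuousOn hf.1.1
  have hB₀ : 0 ≤ B := (norm_nonneg _).trans (hgB 0 (mem_closedBall_self zero_le_one))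
  obtain ⟨η, hη, hfη⟩ := hf.2 (ε / (2 * (B + 1))) (by positivity)
  -- `ω t / t → ∞` absorbs the Lipschitz increment of `g`.
  obtain ⟨r, hr, hωr⟩ := hω.exists_mul_le (2 * L * M / ε)
  refine ⟨min η (r / 2), by positivity, fun z hz w hw hzw => ?_⟩
  set t := dist z w
  rcases (dist_nonneg : 0 ≤ t).eq_or_lt with ht | ht
  · simp [t, dist_eq_zero.1 ht.symm, hω.zero]
  have hωt : 0 ≤ ω t := hω.nonneg ht.le (dist_le_two_of_mem_cDisk hz hw)
  have hLip : L * M * t ≤ ε / 2 * ω t := by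
    have := mul_le_mul_of_nonneg_left (hωr t ht (by linarith [min_le_right η (r / 2)]))
      (by positivity : 0 ≤ ε / 2)
    rwa [show ε / 2 * (2 * L * M / ε * t) = L * M * t by field_simp] at this
  have hBε : B * (ε / (2 * (B + 1))) ≤ ε / 2 := by
    rw [mul_div_assoc', div_le_div_iff₀ (by positivity) two_pos]; nlinarith
  calc ‖g z * f z - g w * f w‖ = ‖g z * (f z - f w) + (g z - g w) * f w‖ := by ring_nf
    _ ≤ ‖g z‖ * ‖f z - f w‖ + ‖g z - g w‖ * ‖f w‖ := by
        rw [← norm_mul, ← norm_mul]; exact norm_add_le _ _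
    _ ≤ B * (ε / (2 * (B + 1)) * ω t) + L * t * M := by
        gcongr
        · exact hgB z hz
        · exact hfη z hz w hw (hzw.trans (min_le_left _ _))
        · exact (norm_nonneg _).trans (hgL z hz w hw)
        · exact hgL z hz w hw
        · exact hM w hw
    _ ≤ ε * ω t := by nlinarith

end ModulusBound

lemma norm_prod_sub_prod_le {ι R : Type*} [NormedCommRing R] [NormOneClass R] (s : Finset ι)
    {u v : ι → R} (hu : ∀ i ∈ s, ‖u i‖ ≤ 1) (hv : ∀ i ∈ s, ‖v i‖ ≤ 1) :
    ‖∏ i ∈ s, u i - ∏ i ∈ s, v i‖ ≤ ∑ i ∈ s, ‖u i - v i‖ := by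
  classical
  induction s using Finset.induction_on with
  | empty => simp
  | insert j s hj ih =>
    simp only [Finset.forall_mem_insert] at hu hv
    have hvs : ‖∏ i ∈ s, v i‖ ≤ 1 :=
      (Finset.norm_prod_le _ _).trans (Finset.prod_le_one (fun _ _ => norm_nonneg _) hv.2)
    rw [Finset.prod_insert hj, Finset.prod_insert hj, Finset.sum_insert hj,
      show u j * ∏ i ∈ s, u i - v j * ∏ i ∈ s, v i =
        u j * (∏ i ∈ s, u i - ∏ i ∈ s, v i) + (u j - v j) * ∏ i ∈ s, v i by ring]
    refine (norm_add_le_of_le (norm_mul_le_of_le hu.1 (ih hu.2 hv.2))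
      (norm_mul_le_of_le le_rfl hvs)).trans_eq ?_
    ring

noncomputable def psiFactor (a : ℂ) (δ : ℝ) (z : ℂ) : ℂ :=
  (z * starRingEnd ℂ a - 1) / (z * starRingEnd ℂ a - 1 - δ)

section psiFactor

variable {a z w : ℂ} {δ : ℝ}

lemma norm_mul_conj_sub_one (ha : ‖a‖ = 1) : ‖z * starRingEnd ℂ a - 1‖ = ‖z - a‖ := by
  have hconj : starRingEnd ℂ a * a = 1 := by
    rw [mul_comm, Complex.mul_conj, Complex.normSq_eq_norm_sq, ha]; norm_num
  rw [← mul_one ‖_‖, ← ha, ← norm_mul, sub_mul, mul_assoc, hconj, mul_one, one_mul]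

lemma max_le_norm_psiFactor_denom (ha : ‖a‖ = 1) (hz : z ∈ cDisk) (hδ : 0 < δ) :
    max δ ‖z - a‖ ≤ ‖z * starRingEnd ℂ a - 1 - δ‖ := by
  set u := z * starRingEnd ℂ a
  have hu : u.re ≤ 1 := (Complex.re_le_norm u).trans <| by
    rw [norm_mul, Complex.norm_conj, ha, mul_one]; exact mem_closedBall_zero_iff.1 hz
  have hsq : ‖u - 1 - δ‖ ^ 2 = (u.re - 1 - δ) ^ 2 + u.im ^ 2 := by
    rw [Complex.sq_norm, Complex.normSq_apply]; simp [sq]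
  have hsq' : ‖u - 1‖ ^ 2 = (u.re - 1) ^ 2 + u.im ^ 2 := by
    rw [Complex.sq_norm, Complex.normSq_apply]; simp [sq]
  rw [← norm_mul_conj_sub_one ha, max_le_iff, ← sq_le_sq₀ hδ.le (norm_nonneg _),
    ← sq_le_sq₀ (norm_nonneg _) (norm_nonneg _), hsq, hsq']
  constructor <;> nlinarith [sq_nonneg u.im]

lemma psiFactor_denom_ne_zero (ha : ‖a‖ = 1) (hz : z ∈ cDisk) (hδ : 0 < δ) :
    z * starRingEnd ℂ a - 1 - δ ≠ 0 :=
  norm_pos_iff.1 <| hδ.trans_le <| (le_max_left _ _).trans (max_le_norm_psiFactor_denom ha hz hδ)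

lemma norm_psiFactor_le_one (ha : ‖a‖ = 1) (hz : z ∈ cDisk) (hδ : 0 < δ) :
    ‖psiFactor a δ z‖ ≤ 1 := by
  rw [psiFactor, norm_div, norm_mul_conj_sub_one ha]
  exact div_le_one_of_le₀ ((le_max_right _ _).trans (max_le_norm_psiFactor_denom ha hz hδ))
    (norm_nonneg _)

lemma norm_psiFactor_sub_one_mul_le (ha : ‖a‖ = 1) (hz : z ∈ cDisk) (hδ : 0 < δ) :
    ‖psiFactor a δ z - 1‖ * max δ ‖z - a‖ ≤ δ := by
  have hne := psiFactor_denom_ne_zero ha hz hδ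
  have : psiFactor a δ z - 1 = δ / (z * starRingEnd ℂ a - 1 - δ) := by
    rw [psiFactor]; field_simp; ring
  rw [this, norm_div, Complex.norm_real, Real.norm_of_nonneg hδ.le, div_mul_eq_mul_div]
  exact div_le_of_le_mul₀ (norm_nonneg _) hδ.le
    (mul_le_mul_of_nonneg_left (max_le_norm_psiFactor_denom ha hz hδ) hδ.le)

lemma norm_psiFactor_sub_mul_le (ha : ‖a‖ = 1) (hz : z ∈ cDisk) (hw : w ∈ cDisk) (hδ : 0 < δ) :
    ‖psiFactor a δ z - psiFactor a δ w‖ * (max δ ‖z - a‖ * max δ ‖w - a‖) ≤ δ * dist z w := by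
  have hz' := psiFactor_denom_ne_zero ha hz hδ
  have hw' := psiFactor_denom_ne_zero ha hw hδ
  have : psiFactor a δ z - psiFactor a δ w = δ * ((w - z) * starRingEnd ℂ a) /
      ((z * starRingEnd ℂ a - 1 - δ) * (w * starRingEnd ℂ a - 1 - δ)) := by
    rw [psiFactor, psiFactor, div_sub_div _ _ hz' hw']; congr 1; ring
  rw [this, norm_div, norm_mul, norm_mul, norm_mul, Complex.norm_conj, ha, mul_one,
    Complex.norm_real, Real.norm_of_nonneg hδ.le, norm_sub_rev, ← dist_eq_norm,
    div_mul_eq_mul_div]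
  exact div_le_of_le_mul₀ (by positivity) (by positivity) <| mul_le_mul_of_nonneg_left
    (mul_le_mul (max_le_norm_psiFactor_denom ha hz hδ) (max_le_norm_psiFactor_denom ha hw hδ)
      (hδ.le.trans (le_max_left _ _)) (norm_nonneg _)) (by positivity)

lemma norm_psiFactor_sub_le (ha : ‖a‖ = 1) (hz : z ∈ cDisk) (hw : w ∈ cDisk) (hδ : 0 < δ) :
    ‖psiFactor a δ z - psiFactor a δ w‖ ≤ dist z w / δ := by
  have h := norm_psiFactor_sub_mul_le ha hz hw hδ
  have hmax : δ * δ ≤ max δ ‖z - a‖ * max δ ‖w - a‖ :=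
    mul_le_mul (le_max_left _ _) (le_max_left _ _) hδ.le (hδ.le.trans (le_max_left _ _))
  rw [le_div_iff₀ hδ]
  nlinarith [mul_le_mul_of_nonneg_left hmax (norm_nonneg (psiFactor a δ z - psiFactor a δ w))]

lemma differentiableOn_psiFactor (ha : ‖a‖ = 1) (hδ : 0 < δ) :
    DifferentiableOn ℂ (psiFactor a δ) cDisk := fun z hz =>
  ((by fun_prop : DifferentiableAt ℂ (fun z => z * starRingEnd ℂ a - 1) z).div (by fun_prop)
    (psiFactor_denom_ne_zero ha hz hδ)).differentiableWithinAt

lemma norm_psiFactor_sub_one_le_one (ha : ‖a‖ = 1) (hz : z ∈ cDisk)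
    (hδ : 0 < δ) : ‖psiFactor a δ z - 1‖ ≤ 1 := by
  have h := norm_psiFactor_sub_one_mul_le ha hz hδ
  have hmax : δ ≤ max δ ‖z - a‖ := le_max_left _ _
  nlinarith [mul_le_mul_of_nonneg_left hmax (norm_nonneg (psiFactor a δ z - 1))]

lemma norm_psiFactor_sub_mul_le_of_two_mul_dist_le (ha : ‖a‖ = 1) (hz : z ∈ cDisk)
    (hw : w ∈ cDisk) (hδ : 0 < δ) (hzw : 2 * dist z w ≤ ‖w - a‖) :
    ‖psiFactor a δ z - psiFactor a δ w‖ * (max δ (‖w - a‖ / 2) * ‖w - a‖) ≤ δ * dist z w := by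
  have hza : ‖w - a‖ / 2 ≤ ‖z - a‖ := by
    have : ‖w - a‖ ≤ dist z w + ‖z - a‖ := by
      rw [dist_comm, dist_eq_norm]; exact norm_sub_le_norm_sub_add_norm_sub w z a
    linarith
  refine le_trans (mul_le_mul_of_nonneg_left ?_ (norm_nonneg _))
    (norm_psiFactor_sub_mul_le ha hz hw hδ)
  exact mul_le_mul (max_le_max le_rfl hza) (le_max_right _ _) (norm_nonneg _)
    (hδ.le.trans (le_max_left _ _))

end psiFactor

noncomputable def psi {ι : Type*} [Fintype ι] (a : ι → ℂ) (δ : ℝ) (z : ℂ) : ℂ :=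
  ∏ n, psiFactor (a n) δ z

section psi

variable {ω : ℝ → ℝ} {f : ℂ → ℂ} {ι : Type*} [Fintype ι] {a : ι → ℂ} {δ : ℝ} {z w : ℂ}

lemma norm_psi_le_one (ha : ∀ n, ‖a n‖ = 1) (hz : z ∈ cDisk) (hδ : 0 < δ) :
    ‖psi a δ z‖ ≤ 1 :=
  (Finset.norm_prod_le _ _).trans <|
    Finset.prod_le_one (fun _ _ => norm_nonneg _) fun n _ => norm_psiFactor_le_one (ha n) hz hδ

lemma norm_psi_sub_le (ha : ∀ n, ‖a n‖ = 1) (hz : z ∈ cDisk) (hw : w ∈ cDisk) (hδ : 0 < δ) :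
    ‖psi a δ z - psi a δ w‖ ≤ ∑ n, ‖psiFactor (a n) δ z - psiFactor (a n) δ w‖ :=
  norm_prod_sub_prod_le _ (fun n _ => norm_psiFactor_le_one (ha n) hz hδ)
    (fun n _ => norm_psiFactor_le_one (ha n) hw hδ)

lemma norm_psi_sub_one_le (ha : ∀ n, ‖a n‖ = 1) (hz : z ∈ cDisk) (hδ : 0 < δ) :
    ‖psi a δ z - 1‖ ≤ ∑ n, ‖psiFactor (a n) δ z - 1‖ := by
  simpa [psi] using norm_prod_sub_prod_le Finset.univ (v := fun _ => (1 : ℂ))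
    (fun n _ => norm_psiFactor_le_one (ha n) hz hδ) (fun _ _ => norm_one.le)

lemma norm_psi_sub_one_le_card (ha : ∀ n, ‖a n‖ = 1) (hz : z ∈ cDisk) (hδ : 0 < δ) :
    ‖psi a δ z - 1‖ ≤ Fintype.card ι :=
  (norm_psi_sub_one_le ha hz hδ).trans <| by
    simpa using Finset.sum_le_sum fun n (_ : n ∈ Finset.univ) =>
      norm_psiFactor_sub_one_le_one (ha n) hz hδ

lemma differentiableOn_psi (ha : ∀ n, ‖a n‖ = 1) (hδ : 0 < δ) :
    DifferentiableOn ℂ (psi a δ) cDisk :=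
  DifferentiableOn.fun_finsetProd fun n _ => differentiableOn_psiFactor (ha n) hδ

lemma norm_psi_sub_le_mul_dist (ha : ∀ n, ‖a n‖ = 1) (hδ : 0 < δ) (hz : z ∈ cDisk)
    (hw : w ∈ cDisk) : ‖psi a δ z - psi a δ w‖ ≤ Fintype.card ι / δ * dist z w :=
  (norm_psi_sub_le ha hz hw hδ).trans <| by
    simpa [div_mul_eq_mul_div, mul_div_assoc] using
      Finset.sum_le_sum fun n (_ : n ∈ Finset.univ) => norm_psiFactor_sub_le (ha n) hz hw hδ

lemma memLambda_psi_mul (hω : IsModulus ω) (hf : MemLambda ω f) (ha : ∀ n, ‖a n‖ = 1)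
    (hδ : 0 < δ) : MemLambda ω (fun z => psi a δ z * f z) :=
  hf.mul_of_lipschitz hω
    ⟨(differentiableOn_psi ha hδ).continuousOn,
      (differentiableOn_psi ha hδ).mono ball_subset_closedBall⟩
    (fun _ hz => norm_psi_le_one ha hz hδ) (fun _ hz _ hw => norm_psi_sub_le_mul_dist ha hδ hz hw)

end psi

section estimates

variable {ω : ℝ → ℝ} {h : ℂ → ℂ} {a z w : ℂ} {δ η C K : ℝ}

lemma norm_psiFactor_sub_one_mul_norm_le (hω : IsModulus ω) (ha : ‖a‖ = 1) (hh : h a = 0)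
    (hK : ModulusBound ω 2 K h) (hK₀ : 0 ≤ K) (hz : z ∈ cDisk) (hδ : 0 < δ) (hδ₂ : δ ≤ 2) :
    ‖psiFactor a δ z - 1‖ * ‖h z‖ ≤ K * ω δ := by
  have hd₂ : ‖z - a‖ ≤ 2 := by
    simpa [dist_eq_norm] using dist_le_two_of_mem_cDisk hz (mem_cDisk_of_norm_eq_one ha)
  have hhz := hK.norm_le_of_eq_zero ha hh hz hd₂
  have hφ := norm_psiFactor_sub_one_mul_le ha hz hδ
  rcases le_or_gt ‖z - a‖ δ with hd | hd
  · calc ‖psiFactor a δ z - 1‖ * ‖h z‖ ≤ 1 * (K * ω ‖z - a‖) :=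
          mul_le_mul (norm_psiFactor_sub_one_le_one ha hz hδ) hhz (norm_nonneg _) zero_le_one
      _ ≤ K * ω δ := by
        rw [one_mul]
        exact mul_le_mul_of_nonneg_left (hω.monoOn ⟨norm_nonneg _, hd₂⟩ ⟨hδ.le, hδ₂⟩ hd) hK₀
  · rw [max_eq_right hd.le] at hφ
    have hratio := hω.mul_apply_le hδ hd.le hd₂
    have hd₀ : 0 < ‖z - a‖ := hδ.trans hd
    refine le_of_mul_le_mul_right ?_ hd₀
    calc ‖psiFactor a δ z - 1‖ * ‖h z‖ * ‖z - a‖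
        = ‖psiFactor a δ z - 1‖ * ‖z - a‖ * ‖h z‖ := by ring
      _ ≤ δ * (K * ω ‖z - a‖) := mul_le_mul hφ hhz (norm_nonneg _) hδ.le
      _ = K * (δ * ω ‖z - a‖) := by ring
      _ ≤ K * (‖z - a‖ * ω δ) := mul_le_mul_of_nonneg_left hratio hK₀
      _ = K * ω δ * ‖z - a‖ := by ring

lemma norm_mul_psiFactor_sub_le_of_two_mul_dist_lt (hω : IsModulus ω) (ha : ‖a‖ = 1)
    (hh : h a = 0) (hC : ModulusBound ω (2 * η) C h) (hK : ModulusBound ω 2 K h) (hC₀ : 0 ≤ C)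
    (hK₀ : 0 ≤ K) (hη : 0 < η) (hz : z ∈ cDisk) (hw : w ∈ cDisk) (hδ : 0 < δ)
    (ht : 0 < dist z w) (hdt : 2 * dist z w < ‖w - a‖) :
    ‖h w‖ * ‖psiFactor a δ z - psiFactor a δ w‖ ≤ (C + K * δ / η) * ω (dist z w) := by
  set t := dist z w
  set d := ‖w - a‖
  set Δ := ‖psiFactor a δ z - psiFactor a δ w‖
  have hd₂ : d ≤ 2 := by
    simpa [dist_eq_norm] using dist_le_two_of_mem_cDisk hw (mem_cDisk_of_norm_eq_one ha)
  have hd₀ : 0 < d := by linarith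
  have hΔ₀ : 0 ≤ Δ := norm_nonneg _
  have hωt : 0 ≤ ω t := hω.nonneg ht.le (dist_le_two_of_mem_cDisk hz hw)
  have hωd : 0 ≤ ω d := hω.nonneg hd₀.le hd₂
  have hratio : t * ω d ≤ d * ω t := hω.mul_apply_le ht (by linarith) hd₂
  have hφ := norm_psiFactor_sub_mul_le_of_two_mul_dist_le ha hz hw hδ hdt.le
  refine le_of_mul_le_mul_right ?_ hd₀
  rcases le_or_gt d (2 * η) with hdη | hdη
  · have hhw : ‖h w‖ ≤ C * ω d := hC.norm_le_of_eq_zero ha hh hw hdη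
    have hΔ : Δ * d ≤ t := by
      nlinarith [mul_le_mul_of_nonneg_left (le_max_left δ (d / 2)) (mul_nonneg hΔ₀ hd₀.le)]
    nlinarith [mul_le_mul hhw hΔ (by positivity) (mul_nonneg hC₀ hωd),
      mul_le_mul_of_nonneg_left hratio hC₀, mul_nonneg (by positivity : 0 ≤ K * δ / η * ω t) hd₀.le]
  · have hhw : ‖h w‖ ≤ K * ω d := hK.norm_le_of_eq_zero ha hh hw hd₂
    have hΔ : Δ * d * d ≤ 2 * δ * t := by
      nlinarith [mul_le_mul_of_nonneg_left (le_max_right δ (d / 2)) (mul_nonneg hΔ₀ hd₀.le)]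
    have hmain : ‖h w‖ * Δ * d ≤ 2 * K * δ * ω t := by
      refine le_of_mul_le_mul_right ?_ hd₀
      nlinarith [mul_le_mul hhw hΔ (by positivity) (mul_nonneg hK₀ hωd),
        mul_le_mul_of_nonneg_left hratio (by positivity : 0 ≤ 2 * K * δ)]
    have hfar : 2 * K * δ * ω t ≤ K * δ / η * ω t * d := by
      rw [div_mul_eq_mul_div, div_mul_eq_mul_div, le_div_iff₀ hη]
      nlinarith [mul_le_mul_of_nonneg_left hdη.le (by positivity : 0 ≤ K * δ * ω t)]
    nlinarith [mul_nonneg (mul_nonneg hC₀ hωt) hd₀.le]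

lemma norm_mul_psiFactor_sub_le (hω : IsModulus ω) (ha : ‖a‖ = 1) (hh : h a = 0)
    (hC : ModulusBound ω (2 * η) C h) (hK : ModulusBound ω 2 K h) (hC₀ : 0 ≤ C) (hK₀ : 0 ≤ K)
    (hη : 0 < η) (hz : z ∈ cDisk) (hw : w ∈ cDisk) (hδ : 0 < δ) (hzw : dist z w ≤ η) :
    ‖h w‖ * ‖psiFactor a δ z - psiFactor a δ w‖ ≤ (4 * C + K * δ / η) * ω (dist z w) := by
  have ht₂ : dist z w ≤ 2 := dist_le_two_of_mem_cDisk hz hw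
  have hd₂ : ‖w - a‖ ≤ 2 := by
    simpa [dist_eq_norm] using dist_le_two_of_mem_cDisk hw (mem_cDisk_of_norm_eq_one ha)
  have hωt : 0 ≤ ω (dist z w) := hω.nonneg dist_nonneg ht₂
  have hKη : 0 ≤ K * δ / η := by positivity
  rcases (dist_nonneg (x := z) (y := w)).eq_or_lt with ht | ht
  · simpa [dist_eq_zero.1 ht.symm] using mul_nonneg (by positivity) hωt
  rcases le_or_gt ‖w - a‖ (2 * dist z w) with hdt | hdt
  · have hhw : ‖h w‖ ≤ C * (2 * ω (dist z w)) :=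
      (hC.norm_le_of_eq_zero ha hh hw (by linarith)).trans <|
        mul_le_mul_of_nonneg_left (hω.le_two_mul (norm_nonneg _) hd₂ hdt ht ht₂) hC₀
    have hΔ : ‖psiFactor a δ z - psiFactor a δ w‖ ≤ 2 := (norm_sub_le _ _).trans <| by
      linarith [norm_psiFactor_le_one ha hz hδ, norm_psiFactor_le_one ha hw hδ]
    nlinarith [mul_le_mul hhw hΔ (norm_nonneg _) (by positivity)]
  · refine (norm_mul_psiFactor_sub_le_of_two_mul_dist_lt hω ha hh hC hK hC₀ hK₀ hη hz hw hδ ht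
      hdt).trans ?_
    nlinarith

end estimates

section psiEstimates

variable {ω : ℝ → ℝ} {f : ℂ → ℂ} {ι : Type*} [Fintype ι] {a : ι → ℂ} {δ η C K : ℝ}

lemma norm_psi_mul_sub_le (hω : IsModulus ω) (ha : ∀ n, ‖a n‖ = 1) (hf : ∀ n, f (a n) = 0)
    (hK : ModulusBound ω 2 K f) (hK₀ : 0 ≤ K) (hδ : 0 < δ) (hδ₂ : δ ≤ 2) {z : ℂ}
    (hz : z ∈ cDisk) : ‖psi a δ z * f z - f z‖ ≤ Fintype.card ι * (K * ω δ) := by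
  rw [← sub_one_mul, norm_mul]
  calc ‖psi a δ z - 1‖ * ‖f z‖ ≤ (∑ n, ‖psiFactor (a n) δ z - 1‖) * ‖f z‖ :=
        mul_le_mul_of_nonneg_right (norm_psi_sub_one_le ha hz hδ) (norm_nonneg _)
    _ ≤ ∑ _n : ι, K * ω δ := by
        rw [Finset.sum_mul]
        exact Finset.sum_le_sum fun n _ =>
          norm_psiFactor_sub_one_mul_norm_le hω (ha n) (hf n) hK hK₀ hz hδ hδ₂
    _ = Fintype.card ι * (K * ω δ) := by simp

lemma modulusBound_psi_mul_sub (hω : IsModulus ω) (ha : ∀ n, ‖a n‖ = 1)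
    (hf : ∀ n, f (a n) = 0) (hC : ModulusBound ω (2 * η) C f) (hK : ModulusBound ω 2 K f)
    (hC₀ : 0 ≤ C) (hK₀ : 0 ≤ K) (hη : 0 < η) (hδ : 0 < δ) :
    ModulusBound ω η (Fintype.card ι * (5 * C + K * δ / η)) (fun z => psi a δ z * f z - f z) := by
  intro z hz w hw hzw
  have hωt : 0 ≤ ω (dist z w) := hω.nonneg dist_nonneg (dist_le_two_of_mem_cDisk hz hw)
  have hfzw : ‖f z - f w‖ ≤ C * ω (dist z w) :=
    hC z hz w hw (by linarith [dist_nonneg (x := z) (y := w)])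
  have hψ : ‖f w‖ * ‖psi a δ z - psi a δ w‖ ≤
      Fintype.card ι * ((4 * C + K * δ / η) * ω (dist z w)) := by
    calc ‖f w‖ * ‖psi a δ z - psi a δ w‖
        ≤ ‖f w‖ * ∑ n, ‖psiFactor (a n) δ z - psiFactor (a n) δ w‖ :=
          mul_le_mul_of_nonneg_left (norm_psi_sub_le ha hz hw hδ) (norm_nonneg _)
      _ ≤ ∑ _n : ι, (4 * C + K * δ / η) * ω (dist z w) := by
          rw [Finset.mul_sum]
          exact Finset.sum_le_sum fun n _ =>
            norm_mul_psiFactor_sub_le hω (ha n) (hf n) hC hK hC₀ hK₀ hη hz hw hδ hzw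
      _ = _ := by simp
  calc ‖(psi a δ z * f z - f z) - (psi a δ w * f w - f w)‖
      = ‖(psi a δ z - 1) * (f z - f w) + f w * (psi a δ z - psi a δ w)‖ := by ring_nf
    _ ≤ ‖psi a δ z - 1‖ * ‖f z - f w‖ + ‖f w‖ * ‖psi a δ z - psi a δ w‖ := by
        rw [← norm_mul, ← norm_mul]; exact norm_add_le _ _
    _ ≤ Fintype.card ι * (C * ω (dist z w)) +
          Fintype.card ι * ((4 * C + K * δ / η) * ω (dist z w)) := by
        gcongr
        · exact norm_psi_sub_one_le_card ha hz hδ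
    _ = Fintype.card ι * (5 * C + K * δ / η) * ω (dist z w) := by ring

lemma tendsto_lambdaNorm_psi_mul_sub (hω : IsModulus ω) (hf : MemLambda ω f)
    (ha : ∀ n, ‖a n‖ = 1) (hfa : ∀ n, f (a n) = 0) :
    Tendsto (fun δ => lambdaNorm ω (fun z => psi a δ z * f z - f z)) (𝓝[>] 0) (𝓝 0) := by
  obtain ⟨K, hK₀, hK⟩ := hf.exists_modulusBound hω
  refine tendsto_order.2 ⟨fun b hb => .of_forall fun δ => hb.trans_le (lambdaNorm_nonneg hω _),
    fun ε hε => ?_⟩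
  set n : ℝ := (Fintype.card ι : ℝ)
  set C := ε / (10 * (n + 1))
  have hC₀ : 0 < C := by positivity
  obtain ⟨η₀, hη₀, hC⟩ := hf.2 C hC₀
  obtain ⟨η, hη, hη₂, hηη₀⟩ : ∃ η, 0 < η ∧ η ≤ 2 ∧ 2 * η ≤ η₀ :=
    ⟨min η₀ 2 / 2, by positivity, by linarith [min_le_right η₀ 2], by linarith [min_le_left η₀ 2]⟩
  have hCη : ModulusBound ω (2 * η) C f := fun z hz w hw hzw => hC z hz w hw (hzw.trans hηη₀)
  have hωη := hω.pos hη hη₂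
  have hbound : ∀ δ, 0 < δ → δ ≤ 2 → lambdaNorm ω (fun z => psi a δ z * f z - f z) ≤
      n * (K * ω δ) + (n * (5 * C + K * δ / η) + 2 * (n * (K * ω δ)) / ω η) := by
    intro δ hδ hδ₂
    have hωδ := hω.nonneg hδ.le hδ₂
    exact lambdaNorm_le hω (fun z hz => norm_psi_mul_sub_le hω ha hfa hK hK₀ hδ hδ₂ hz)
      ((modulusBound_psi_mul_sub hω ha hfa hCη hK hC₀.le hK₀ hη hδ).of_norm_le hω
        (fun z hz => norm_psi_mul_sub_le hω ha hfa hK hK₀ hδ hδ₂ hz) hη hη₂ (by positivity))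
      (by positivity) (by positivity)
  have hω₀ := hω.tendsto_nhdsGT
  have hid : Tendsto (fun δ : ℝ => δ) (𝓝[>] 0) (𝓝 0) :=
    tendsto_nhdsWithin_of_tendsto_nhds tendsto_id
  have hlim : Tendsto (fun δ => n * (K * ω δ) + (n * (5 * C + K * δ / η) +
      2 * (n * (K * ω δ)) / ω η)) (𝓝[>] 0) (𝓝 (n * (5 * C))) := by
    simpa using ((hω₀.const_mul K).const_mul n).add
      ((((hid.const_mul K).div_const η).const_add (5 * C)).const_mul n |>.add
        ((((hω₀.const_mul K).const_mul n).const_mul 2).div_const (ω η)))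
  have hlt : n * (5 * C) < ε := by
    have hn : 0 ≤ n := Nat.cast_nonneg _
    rw [show n * (5 * C) = ε * (n / (2 * (n + 1))) by simp only [C]; field_simp; ring]
    exact mul_lt_of_lt_one_right hε ((div_lt_one (by positivity)).2 (by linarith))
  filter_upwards [hlim.eventually (gt_mem_nhds hlt), Ioc_mem_nhdsGT two_pos] with δ hδε hδ
  exact (hbound δ hδ.1 hδ.2).trans_lt hδε

end psiEstimates

/-- **Lemma 3.3**: for `f ∈ Λ_ω` and boundary zeros `a_0, …, a_N` of `f`, the
functions `ψ_{δ,N}·f`, where `ψ_{δ,N}(z) = ∏ₙ (z·conj(aₙ) − 1)/(z·conj(aₙ) − 1 − δ)`,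
belong to `Λ_ω` and `‖ψ_{δ,N}·f − f‖_ω → 0` as `δ → 0⁺`. -/
theorem psi_mul_tendsto (ω : ℝ → ℝ) (hω : IsModulus ω)
    (f : ℂ → ℂ) (hf : MemLambda ω f)
    (N : ℕ) (a : Fin (N + 1) → ℂ) (ha : ∀ n, a n ∈ uCircle)
    (haz : ∀ n, f (a n) = 0) :
    (∀ δ : ℝ, 0 < δ → MemLambda ω (fun z =>
      (∏ n, (z * (starRingEnd ℂ) (a n) - 1) / (z * (starRingEnd ℂ) (a n) - 1 - (δ : ℂ))) * f z)) ∧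
    Tendsto (fun δ : ℝ => lambdaNorm ω (fun z =>
      (∏ n, (z * (starRingEnd ℂ) (a n) - 1) / (z * (starRingEnd ℂ) (a n) - 1 - (δ : ℂ))) * f z
        - f z))
      (nhdsWithin 0 (Ioi 0)) (nhds 0) := by
  have ha' : ∀ n, ‖a n‖ = 1 := fun n => mem_sphere_zero_iff_norm.1 (ha n)
  exact ⟨fun δ hδ => memLambda_psi_mul hω hf ha' hδ, tendsto_lambdaNorm_psi_mul_sub hω hf ha' haz⟩
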